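/- arXiv:2209.00598 — 7 statements merged into one kernel-verified Lean document; each statement's English description precedes it below -/
import Mathlib

section
/- Let (X, ‖·‖) be a real normed vector space and let u, v ∈ X be distinct. Suppose x, y ∈ X are distinct and C ∈ (0,1) is such that ‖x − u‖ = ‖y − u‖ = C·‖u − v‖ and ‖v − x‖ = ‖v − y‖ = (1 − C)·‖u − v‖. Define γ : [0,1] → X by γ(z) = ((C − z)/C)·u + (z/C)·x for 0 ≤ z ≤ C and γ(z) = ((1 − z)/(1 − C))·x + ((z − C)/(1 − C))·v for C < z ≤ 1, and define σ : [0,1] → X analogously with y in place of x. Then γ and σ are geodesics from u to v, and they are disjoint, i.e. whenever γ(w) = σ(z) for w, z ∈ [0,1], the common value lies in {u, v}. -/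
/-!
A map `γ : [0,1] → X` with `γ 0 = u`, `γ 1 = v` that is `d(u,v)`-Lipschitz is already a geodesic:
the triangle inequality along `u, γ s, γ t, v` makes every Lipschitz bound sharp. The broken line
`u → x → v`, run at constant speed, is such a map because its legs have lengths `C·d` and
`(1 - C)·d`. A geodesic is parametrised by distance from `u`, so `γ w = σ z` forces `w = z`; on
either leg the two points are then images of `x ≠ y` under the same homothety, which is
invertible unless `w ∈ {0, 1}`.
-/

/-- A geodesic from `u` to `v` in a metric space `X`: a map `γ : [0,1] → X` with
`γ 0 = u`, `γ 1 = v` and `d(γ s, γ t) = |s - t| * d(u,v)` for all `s, t ∈ [0,1]`. -/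
def IsGeodesic {X : Type*} [MetricSpace X] (u v : X) (γ : unitInterval → X) : Prop :=
  γ 0 = u ∧ γ 1 = v ∧
    ∀ s t : unitInterval, dist (γ s) (γ t) = |(s : ℝ) - (t : ℝ)| * dist u v

/-- Two geodesics from `u` to `v` are disjoint if their images intersect only at
points in `{u, v}`. -/
def DisjointGeodesics {X : Type*} [MetricSpace X] (u v : X)
    (γ σ : unitInterval → X) : Prop :=
  ∀ w z : unitInterval, γ w = σ z → γ w = u ∨ γ w = v

open AffineMap Set

theorem IsGeodesic.of_dist_le {X : Type*} [MetricSpace X] {u v : X} {γ : unitInterval → X}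
    (h0 : γ 0 = u) (h1 : γ 1 = v)
    (hγ : ∀ s t : unitInterval, dist (γ s) (γ t) ≤ |(s : ℝ) - t| * dist u v) :
    IsGeodesic u v γ := by
  refine ⟨h0, h1, fun s t => (hγ s t).antisymm ?_⟩
  have hus := hγ 0 s
  have hut := hγ 0 t
  have hsv := hγ s 1
  have htv := hγ t 1
  rw [h0] at hus hut
  rw [h1] at hsv htv
  have hst := dist_triangle4 u (γ s) (γ t) v
  have hts := dist_triangle4 u (γ t) (γ s) v
  rw [dist_comm (γ t)] at hts
  simp only [Set.Icc.coe_zero, Set.Icc.coe_one, zero_sub, abs_neg,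
    abs_of_nonneg s.2.1, abs_of_nonneg t.2.1, abs_of_nonpos (sub_nonpos.2 s.2.2),
    abs_of_nonpos (sub_nonpos.2 t.2.2)] at hus hut hsv htv
  rcases le_total (s : ℝ) t with h | h
  · rw [abs_of_nonpos (sub_nonpos.2 h)]
    linarith
  · rw [abs_of_nonneg (sub_nonneg.2 h)]
    linarith

theorem IsGeodesic.dist_left {X : Type*} [MetricSpace X] {u v : X} {γ : unitInterval → X}
    (hγ : IsGeodesic u v γ) (s : unitInterval) : dist u (γ s) = s * dist u v := by
  simpa [hγ.1, abs_of_nonneg s.2.1] using hγ.2.2 0 s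

theorem IsGeodesic.eq_of_apply_eq {X : Type*} [MetricSpace X] {u v : X}
    {γ σ : unitInterval → X} (hγ : IsGeodesic u v γ) (hσ : IsGeodesic u v σ) (huv : u ≠ v)
    {w z : unitInterval} (h : γ w = σ z) : w = z := by
  have := hγ.dist_left w
  rw [h, hσ.dist_left z] at this
  exact Subtype.ext (mul_right_cancel₀ (dist_ne_zero.2 huv) this).symm

theorem dist_ite_le_of_dist_le {X : Type*} [PseudoMetricSpace X] {f g : ℝ → X} {b K : ℝ}
    (hf : ∀ s t, dist (f s) (f t) ≤ |s - t| * K) (hg : ∀ s t, dist (g s) (g t) ≤ |s - t| * K)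
    (hfg : f b = g b) (s t : ℝ) :
    dist (if s ≤ b then f s else g s) (if t ≤ b then f t else g t) ≤ |s - t| * K := by
  have mixed : ∀ s t, s ≤ b → b < t → dist (f s) (g t) ≤ |s - t| * K := fun s t hs ht =>
    calc dist (f s) (g t) ≤ dist (f s) (f b) + dist (g b) (g t) := hfg ▸ dist_triangle _ _ _
      _ ≤ |s - b| * K + |b - t| * K := add_le_add (hf s b) (hg b t)
      _ = |s - t| * K := by
        rw [abs_of_nonpos (by linarith), abs_of_neg (by linarith), abs_of_neg (by linarith)]
        ring
  split_ifs with hs ht ht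
  · exact hf s t
  · exact mixed s t hs (not_le.1 ht)
  · rw [dist_comm, abs_sub_comm]
    exact mixed t s ht (not_le.1 hs)
  · exact hg s t

theorem eq_of_lineMap_eq_lineMap_left {k V : Type*} [Field k] [AddCommGroup V] [Module k V]
    {p x y : V} {c : k} (hc : c ≠ 0) (h : lineMap p x c = lineMap p y c) : x = y := by
  rw [lineMap_apply_module', lineMap_apply_module'] at h
  exact sub_left_injective (smul_right_injective V hc (add_right_cancel h))

theorem eq_of_lineMap_eq_lineMap_right {k V : Type*} [Field k] [AddCommGroup V] [Module k V]
    {p x y : V} {c : k} (hc : c ≠ 1) (h : lineMap x p c = lineMap y p c) : x = y := by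
  rw [lineMap_apply_module, lineMap_apply_module] at h
  exact smul_right_injective V (sub_ne_zero.2 hc.symm) (add_right_cancel h)

section BrokenLine

variable {X : Type*} [NormedAddCommGroup X] [NormedSpace ℝ X]

noncomputable def brokenLine (u x v : X) (C s : ℝ) : X :=
  if s ≤ C then lineMap u x (s / C) else lineMap x v ((s - C) / (1 - C))

variable {u v x : X} {C : ℝ}

theorem brokenLine_eq (hC : C ∈ Ioo (0 : ℝ) 1) (s : ℝ) : brokenLine u x v C s =
    if s ≤ C then ((C - s) / C) • u + (s / C) • x
    else ((1 - s) / (1 - C)) • x + ((s - C) / (1 - C)) • v := by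
  have hC0 : C ≠ 0 := hC.1.ne'
  have hC1 : 1 - C ≠ 0 := sub_ne_zero.2 hC.2.ne'
  unfold brokenLine
  split_ifs
  · rw [lineMap_apply_module]
    congr 2
    field_simp
  · rw [lineMap_apply_module]
    congr 2
    field_simp
    ring

theorem dist_brokenLine_le (hC : C ∈ Ioo (0 : ℝ) 1) (hxu : ‖x - u‖ = C * ‖u - v‖)
    (hvx : ‖v - x‖ = (1 - C) * ‖u - v‖) (s t : ℝ) :
    dist (brokenLine u x v C s) (brokenLine u x v C t) ≤ |s - t| * dist u v := by
  have hC1 : 0 < 1 - C := sub_pos.2 hC.2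
  refine dist_ite_le_of_dist_le (f := fun s => lineMap u x (s / C))
    (g := fun s => lineMap x v ((s - C) / (1 - C))) (fun a b => le_of_eq ?_) (fun a b => le_of_eq ?_) ?_ s t
  · rw [dist_lineMap_lineMap, Real.dist_eq, ← sub_div, abs_div, abs_of_pos hC.1,
      dist_eq_norm, norm_sub_rev, hxu, dist_eq_norm]
    field_simp [hC.1.ne']
  · rw [dist_lineMap_lineMap, Real.dist_eq, ← sub_div, abs_div, abs_of_pos hC1,
      dist_eq_norm, norm_sub_rev, hvx, dist_eq_norm]
    field_simp
    ring_nf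
  · simp [hC.1.ne']

theorem isGeodesic_brokenLine (hC : C ∈ Ioo (0 : ℝ) 1) (hxu : ‖x - u‖ = C * ‖u - v‖)
    (hvx : ‖v - x‖ = (1 - C) * ‖u - v‖) :
    IsGeodesic u v (fun s : unitInterval => brokenLine u x v C s) := by
  refine .of_dist_le ?_ ?_ fun s t => dist_brokenLine_le hC hxu hvx s t
  · simp [brokenLine, hC.1.le]
  · simp [brokenLine, not_le.2 hC.2, sub_ne_zero.2 hC.2.ne']

theorem brokenLine_eq_or_eq_of_eq {y : X} (hxy : x ≠ y) {s : ℝ}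
    (h : brokenLine u x v C s = brokenLine u y v C s) :
    brokenLine u x v C s = u ∨ brokenLine u x v C s = v := by
  unfold brokenLine at h ⊢
  split_ifs at h ⊢
  · left
    by_contra hne
    exact hxy (eq_of_lineMap_eq_lineMap_left (fun hc => hne (by rw [hc, lineMap_apply_zero])) h)
  · right
    by_contra hne
    exact hxy (eq_of_lineMap_eq_lineMap_right (fun hc => hne (by rw [hc, lineMap_apply_one])) h)

end BrokenLine

theorem statement1 {X : Type*} [NormedAddCommGroup X] [NormedSpace ℝ X]
    (u v x y : X) (huv : u ≠ v) (hxy : x ≠ y) (C : ℝ) (hC : C ∈ Set.Ioo (0 : ℝ) 1)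
    (hxu : ‖x - u‖ = C * ‖u - v‖) (hyu : ‖y - u‖ = C * ‖u - v‖)
    (hvx : ‖v - x‖ = (1 - C) * ‖u - v‖) (hvy : ‖v - y‖ = (1 - C) * ‖u - v‖)
    (γ σ : unitInterval → X)
    (hγ : ∀ z : unitInterval, γ z =
      if (z : ℝ) ≤ C then ((C - (z : ℝ)) / C) • u + ((z : ℝ) / C) • x
      else ((1 - (z : ℝ)) / (1 - C)) • x + (((z : ℝ) - C) / (1 - C)) • v)
    (hσ : ∀ z : unitInterval, σ z =
      if (z : ℝ) ≤ C then ((C - (z : ℝ)) / C) • u + ((z : ℝ) / C) • y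
      else ((1 - (z : ℝ)) / (1 - C)) • y + (((z : ℝ) - C) / (1 - C)) • v) :
    IsGeodesic u v γ ∧ IsGeodesic u v σ ∧ DisjointGeodesics u v γ σ := by
  obtain rfl : γ = fun s : unitInterval => brokenLine u x v C s := funext fun s => by rw [hγ, brokenLine_eq hC]
  obtain rfl : σ = fun s : unitInterval => brokenLine u y v C s := funext fun s => by rw [hσ, brokenLine_eq hC]
  have hγgeo := isGeodesic_brokenLine hC hxu hvx
  have hσgeo := isGeodesic_brokenLine hC hyu hvy
  refine ⟨hγgeo, hσgeo, fun w z h => ?_⟩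
  obtain rfl := hγgeo.eq_of_apply_eq hσgeo huv h
  exact brokenLine_eq_or_eq_of_eq hxy h
end

section
/- For any two distinct continuous functions u, v : [0,1] → ℝ, there exist C ∈ (0,1) and distinct continuous functions x, y : [0,1] → ℝ such that ∫₀¹ |x(t) − u(t)| dt = ∫₀¹ |y(t) − u(t)| dt = C·∫₀¹ |u(t) − v(t)| dt and ∫₀¹ |v(t) − x(t)| dt = ∫₀¹ |v(t) − y(t)| dt = (1 − C)·∫₀¹ |u(t) − v(t)| dt. (This is the condition which, by the characterisation of multigeodesic normed spaces, shows that the space C([0,1]) of continuous real-valued functions on [0,1] with the norm ‖f‖₁ = ∫₀¹ |f(t)| dt is multigeodesic.) -/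
/-!
Take `C` to be the normalised first moment `∫ t |u - v| / ∫ |u - v|`, which lies strictly in
`(0, 1)`, and compare two continuous interpolations `u + c (v - u)` with `0 ≤ c ≤ 1`: the moving
weight `c t = t` and the constant weight `c t = C`. For any such weight the `L¹` distances to `u`
and to `v` are `∫ c |u - v|` and `∫ (1 - c) |u - v|`, so both interpolations have distances
`C ‖u - v‖₁` and `(1 - C) ‖u - v‖₁`. They differ because `(t - C)(v - u)` vanishes only if `v - u`
vanishes off the single point `C`, hence everywhere.
-/

open MeasureTheory Topology Set

instance unitInterval.isOpenPosMeasure_volume :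
    (volume : Measure unitInterval).IsOpenPosMeasure where
  open_pos U hU hne := by
    obtain ⟨V, hV, rfl⟩ := isOpen_induced_iff.mp hU
    obtain ⟨t, htV⟩ := hne
    have hVIoo : (V ∩ Ioo (0 : ℝ) 1).Nonempty := by
      have ht : (t : ℝ) ∈ closure (Ioo (0 : ℝ) 1) := by
        rw [closure_Ioo zero_ne_one]
        exact t.2
      exact mem_closure_iff.mp ht V hV htV
    rw [unitInterval.volume_apply, Subtype.image_preimage_coe]
    refine ((hV.inter isOpen_Ioo).measure_ne_zero volume hVIoo) ∘ measure_mono_null ?_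
    exact fun x hx => ⟨Ioo_subset_Icc_self hx.2, hx.1⟩

theorem exists_mul_ne_zero_of_ne_zero {X R : Type*} [TopologicalSpace X] [TopologicalSpace R]
    [T2Space R] [MulZeroClass R] [NoZeroDivisors R] {t₀ : X} [(𝓝[≠] t₀).NeBot] {g w : X → R}
    (hg : ∀ t ≠ t₀, g t ≠ 0) (hw : Continuous w) (hw₀ : w ≠ 0) : ∃ t, g t * w t ≠ 0 := by
  by_contra! h
  refine hw₀ (Continuous.ext_on (dense_compl_singleton t₀) hw continuous_const fun t ht => ?_)
  exact (mul_eq_zero.mp (h t)).resolve_left (hg t ht)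

theorem ContinuousMap.add_mul_sub_ne_add_mul_sub {X : Type*} [TopologicalSpace X] {t₀ : X}
    [(𝓝[≠] t₀).NeBot] {u v c₁ c₂ : C(X, ℝ)} (hc : ∀ t ≠ t₀, c₁ t ≠ c₂ t) (huv : u ≠ v) :
    u + c₁ * (v - u) ≠ u + c₂ * (v - u) := fun h => by
  obtain ⟨t, ht⟩ := exists_mul_ne_zero_of_ne_zero (g := c₁ - c₂)
    (fun t ht => sub_ne_zero.mpr (hc t ht)) (v - u).continuous
    (fun h => sub_ne_zero.mpr huv.symm (DFunLike.coe_injective h))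
  refine ht ?_
  have := congrArg (· t) h
  simp only [ContinuousMap.add_apply, ContinuousMap.mul_apply, ContinuousMap.sub_apply] at this ⊢
  linear_combination this

section Interpolation

variable {X : Type*} [TopologicalSpace X] [MeasurableSpace X] {μ : Measure X}

theorem integral_abs_add_mul_sub_sub_self (u v c : C(X, ℝ)) (hc : ∀ t, 0 ≤ c t) :
    ∫ t, |(u + c * (v - u)) t - u t| ∂μ = ∫ t, c t * |u t - v t| ∂μ := by
  congr 1 with t
  simp only [ContinuousMap.add_apply, ContinuousMap.mul_apply, ContinuousMap.sub_apply,
    add_sub_cancel_left, abs_mul, abs_of_nonneg (hc t), abs_sub_comm]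

theorem integral_abs_sub_add_mul_sub (u v c : C(X, ℝ)) (hc : ∀ t, c t ≤ 1) :
    ∫ t, |v t - (u + c * (v - u)) t| ∂μ = ∫ t, (1 - c t) * |u t - v t| ∂μ := by
  congr 1 with t
  simp only [ContinuousMap.add_apply, ContinuousMap.mul_apply, ContinuousMap.sub_apply]
  rw [show v t - (u t + c t * (v t - u t)) = (1 - c t) * (v t - u t) by ring, abs_mul,
    abs_of_nonneg (sub_nonneg.mpr (hc t)), abs_sub_comm]

end Interpolation

section CompactSpace

variable {X : Type*} [TopologicalSpace X] [CompactSpace X] [MeasurableSpace X]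
  [OpensMeasurableSpace X] {μ : Measure X} [IsFiniteMeasure μ]

theorem Continuous.integrable_of_compactSpace {f : X → ℝ} (hf : Continuous f) : Integrable f μ :=
  hf.integrable_of_hasCompactSupport (.of_compactSpace f)

theorem integral_one_sub_mul_abs {c w : X → ℝ} (hc : Continuous c) (hw : Continuous w) :
    ∫ t, (1 - c t) * |w t| ∂μ = ∫ t, |w t| ∂μ - ∫ t, c t * |w t| ∂μ := by
  simp only [sub_mul, one_mul]
  exact integral_sub hw.abs.integrable_of_compactSpace (hc.mul hw.abs).integrable_of_compactSpace

theorem integral_mul_abs_pos [μ.IsOpenPosMeasure] {t₀ : X} [(𝓝[≠] t₀).NeBot] {g w : X → ℝ}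
    (hg : Continuous g) (hg₀ : 0 ≤ g) (hg_ne : ∀ t ≠ t₀, g t ≠ 0) (hw : Continuous w)
    (hw₀ : w ≠ 0) : 0 < ∫ t, g t * |w t| ∂μ := by
  obtain ⟨t, ht⟩ := exists_mul_ne_zero_of_ne_zero hg_ne hw.abs (by simpa [funext_iff] using hw₀)
  exact (hg.mul hw.abs).integral_pos_of_hasCompactSupport_nonneg_nonzero (.of_compactSpace _)
    (fun t => mul_nonneg (hg₀ t) (abs_nonneg _)) ht

end CompactSpace

theorem unitInterval.integral_coe_mul_abs_mem_Ioo {w : unitInterval → ℝ} (hw : Continuous w)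
    (hw₀ : w ≠ 0) : ∫ t : unitInterval, (t : ℝ) * |w t| ∈ Ioo 0 (∫ t, |w t|) := by
  have hpos : 0 < ∫ t : unitInterval, (t : ℝ) * |w t| :=
    integral_mul_abs_pos (t₀ := 0) (by fun_prop) unitInterval.nonneg
      (fun _ => unitInterval.coe_ne_zero.mpr) hw hw₀
  have hpos' : 0 < ∫ t : unitInterval, (1 - (t : ℝ)) * |w t| :=
    integral_mul_abs_pos (t₀ := 1) (by fun_prop) (fun t => sub_nonneg.mpr t.2.2)
      (fun _ ht => sub_ne_zero.mpr (unitInterval.coe_ne_one.mpr ht).symm) hw hw₀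
  rw [integral_one_sub_mul_abs (by fun_prop) hw] at hpos'
  exact ⟨hpos, sub_pos.mp hpos'⟩

theorem statement6 (u v : C(unitInterval, ℝ)) (huv : u ≠ v) :
    ∃ C ∈ Set.Ioo (0 : ℝ) 1, ∃ x y : C(unitInterval, ℝ), x ≠ y ∧
      (∫ t : unitInterval, |x t - u t|) = C * ∫ t : unitInterval, |u t - v t| ∧
      (∫ t : unitInterval, |y t - u t|) = C * ∫ t : unitInterval, |u t - v t| ∧
      (∫ t : unitInterval, |v t - x t|) = (1 - C) * ∫ t : unitInterval, |u t - v t| ∧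
      (∫ t : unitInterval, |v t - y t|) = (1 - C) * ∫ t : unitInterval, |u t - v t| := by
  have hw : Continuous fun t => u t - v t := by fun_prop
  obtain ⟨hP, hPS⟩ := unitInterval.integral_coe_mul_abs_mem_Ioo hw fun h =>
    huv (ContinuousMap.ext fun t => sub_eq_zero.mp (congrFun h t))
  set S := ∫ t : unitInterval, |u t - v t|
  set P := ∫ t : unitInterval, (t : ℝ) * |u t - v t|
  have hS : S ≠ 0 := (hP.trans hPS).ne'
  have hC : P / S ∈ Ioo (0 : ℝ) 1 := ⟨by positivity, (div_lt_one (hP.trans hPS)).mpr hPS⟩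
  let c : C(unitInterval, ℝ) := ⟨(↑), continuous_subtype_val⟩
  refine ⟨P / S, hC, u + c * (v - u), u + .const _ (P / S) * (v - u), ?_, ?_, ?_, ?_, ?_⟩
  · exact ContinuousMap.add_mul_sub_ne_add_mul_sub (t₀ := ⟨P / S, Ioo_subset_Icc_self hC⟩)
      (fun t ht h => ht (Subtype.ext h)) huv
  · rw [integral_abs_add_mul_sub_sub_self _ _ _ unitInterval.nonneg]
    exact (div_mul_cancel₀ P hS).symm
  · rw [integral_abs_add_mul_sub_sub_self _ _ _ fun _ => hC.1.le]
    exact integral_const_mul _ _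
  · rw [integral_abs_sub_add_mul_sub _ _ _ unitInterval.le_one, sub_mul, div_mul_cancel₀ P hS,
      one_mul]
    exact integral_one_sub_mul_abs continuous_subtype_val hw
  · rw [integral_abs_sub_add_mul_sub _ _ _ fun _ => hC.2.le]
    exact integral_const_mul (1 - P / S) _
end

section
/- Let (X, ‖·‖) be a nontrivial finite-dimensional real normed vector space. Then X is not multigeodesic; that is, there exist distinct u, v ∈ X between which there is exactly one geodesic. -/
/-- A metric space is multigeodesic if between any two distinct points there are
at least two distinct geodesics. -/
def Multigeodesic (X : Type*) [MetricSpace X] : Prop :=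
  ∀ u v : X, u ≠ v → ∃ γ σ : unitInterval → X,
    IsGeodesic u v γ ∧ IsGeodesic u v σ ∧ γ ≠ σ

/-!
The closed unit ball of a nontrivial finite-dimensional normed space is compact, so by
Krein–Milman it has an extreme point `w`, and `‖w‖ = 1`. Along any geodesic `γ` from `0` to `w`
the point `x = γ t` satisfies `‖x‖ = t` and `‖w - x‖ = 1 - t`, so `w = t • (t⁻¹ • x) +
(1 - t) • ((1 - t)⁻¹ • (w - x))` is a convex combination of two points of the unit ball.
Extremality forces `x = t • w`: the segment is the only geodesic from `0` to `w`.
-/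

open Set Metric

theorem IsGeodesic.dist_left_apply {X : Type*} [MetricSpace X] {u v : X} {γ : unitInterval → X}
    (hγ : IsGeodesic u v γ) (t : unitInterval) : dist u (γ t) = t * dist u v := by
  obtain ⟨h0, -, hd⟩ := hγ
  simpa [h0, abs_of_nonneg t.2.1] using hd 0 t

theorem IsGeodesic.dist_right_apply {X : Type*} [MetricSpace X] {u v : X} {γ : unitInterval → X}
    (hγ : IsGeodesic u v γ) (t : unitInterval) : dist v (γ t) = (1 - t) * dist u v := by
  obtain ⟨-, h1, hd⟩ := hγ
  simpa [h1, abs_of_nonneg (sub_nonneg.2 t.2.2)] using hd 1 t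

theorem isGeodesic_lineMap {V P : Type*} [NormedAddCommGroup V] [NormedSpace ℝ V] [MetricSpace P]
    [NormedAddTorsor V P] (u v : P) :
    IsGeodesic u v (fun t : unitInterval ↦ AffineMap.lineMap u v (t : ℝ)) :=
  ⟨by simp, by simp, fun s t ↦ by rw [dist_lineMap_lineMap, Real.dist_eq]⟩

section ExtremePoint

variable {X : Type*} [NormedAddCommGroup X] [NormedSpace ℝ X]

theorem eq_smul_of_mem_extremePoints_closedBall {w x : X}
    (hw : w ∈ extremePoints ℝ (closedBall (0 : X) 1)) {t : ℝ} (ht₀ : 0 ≤ t) (ht₁ : t ≤ 1)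
    (hx : ‖x‖ ≤ t) (hwx : ‖w - x‖ ≤ 1 - t) : x = t • w := by
  rcases ht₀.eq_or_lt with rfl | ht₀
  · simpa using norm_le_zero_iff.1 hx
  rcases ht₁.eq_or_lt with rfl | ht₁
  · rw [one_smul]
    exact (sub_eq_zero.1 (norm_le_zero_iff.1 (by simpa using hwx))).symm
  have hs : 0 < 1 - t := sub_pos.2 ht₁
  have hx_mem : t⁻¹ • x ∈ closedBall (0 : X) 1 := by
    rw [mem_closedBall_zero_iff, norm_smul, Real.norm_of_nonneg (inv_nonneg.2 ht₀.le)]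
    exact inv_mul_le_one_of_le₀ hx ht₀.le
  have hwx_mem : (1 - t)⁻¹ • (w - x) ∈ closedBall (0 : X) 1 := by
    rw [mem_closedBall_zero_iff, norm_smul, Real.norm_of_nonneg (inv_nonneg.2 hs.le)]
    exact inv_mul_le_one_of_le₀ hwx hs.le
  have hseg : w ∈ openSegment ℝ (t⁻¹ • x) ((1 - t)⁻¹ • (w - x)) := by
    refine ⟨t, 1 - t, ht₀, hs, by ring, ?_⟩
    rw [smul_smul, smul_smul, mul_inv_cancel₀ ht₀.ne', mul_inv_cancel₀ hs.ne', one_smul,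
      one_smul, add_sub_cancel]
  have hxw : t⁻¹ • x = w := hw.2 hx_mem hwx_mem hseg
  rw [← hxw, smul_smul, mul_inv_cancel₀ ht₀.ne', one_smul]

theorem IsGeodesic.eq_lineMap_of_mem_extremePoints_closedBall {w : X} {γ : unitInterval → X}
    (hw : w ∈ extremePoints ℝ (closedBall (0 : X) 1)) (hγ : IsGeodesic 0 w γ) :
    γ = fun t : unitInterval ↦ AffineMap.lineMap 0 w (t : ℝ) := by
  have hw₁ : ‖w‖ ≤ 1 := mem_closedBall_zero_iff.1 hw.1
  funext t
  rw [AffineMap.lineMap_apply_module, smul_zero, zero_add]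
  refine eq_smul_of_mem_extremePoints_closedBall hw t.2.1 t.2.2 ?_ ?_
  · calc ‖γ t‖ = t * ‖w‖ := by simpa using hγ.dist_left_apply t
      _ ≤ t := mul_le_of_le_one_right t.2.1 hw₁
  · calc ‖w - γ t‖ = (1 - t) * ‖w‖ := by simpa [dist_eq_norm] using hγ.dist_right_apply t
      _ ≤ 1 - t := mul_le_of_le_one_right (sub_nonneg.2 t.2.2) hw₁

end ExtremePoint

theorem not_multigeodesic_of_existsUnique {X : Type*} [MetricSpace X] {u v : X} (huv : u ≠ v)
    (h : ∃! γ : unitInterval → X, IsGeodesic u v γ) : ¬ Multigeodesic X := fun hX ↦ by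
  obtain ⟨γ, σ, hγ, hσ, hne⟩ := hX u v huv
  exact hne (h.unique hγ hσ)

theorem statement7 {X : Type*} [NormedAddCommGroup X] [NormedSpace ℝ X]
    [Nontrivial X] [FiniteDimensional ℝ X] :
    ¬ Multigeodesic X ∧
      ∃ u v : X, u ≠ v ∧ ∃! γ : unitInterval → X, IsGeodesic u v γ := by
  obtain ⟨w, hw⟩ := (isCompact_closedBall (0 : X) 1).extremePoints_nonempty
    ⟨0, mem_closedBall_self zero_le_one⟩
  have hw₀ : (0 : X) ≠ w := by
    have := extremePoints_closedBall_subset_sphere hw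
    rintro rfl
    simp at this
  have huniq : ∃! γ : unitInterval → X, IsGeodesic 0 w γ :=
    ⟨_, isGeodesic_lineMap 0 w, fun _ hγ ↦ hγ.eq_lineMap_of_mem_extremePoints_closedBall hw⟩
  exact ⟨not_multigeodesic_of_existsUnique hw₀ huniq, 0, w, hw₀, huniq⟩
end

section
/- Let n ∈ ℕ, let ‖·‖ be a norm on ℝⁿ, and let ‖·‖₂ denote the Euclidean norm. Suppose x ∈ ℝⁿ satisfies ‖x‖ = 1 and ‖y‖₂ ≤ ‖x‖₂ for all y ∈ ℝⁿ with ‖y‖ ≤ 1. Then for every C ∈ (0,1), if y ∈ ℝⁿ satisfies ‖y‖ = C and ‖y − x‖ = 1 − C, then y = C·x. -/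
/-!
Rescale `y` and `x - y` to `N`-unit vectors `z` and `w`. Then `x = C • z + (1 - C) • w` is a proper
convex combination of two vectors that, by maximality of `x`, are no longer than `x` in the
Euclidean norm; strict convexity of that norm forces `z = w = x`, hence `y = C • z = C • x`.
-/

theorem eq_of_eq_combo_of_norm_le {E : Type*} [NormedAddCommGroup E] [NormedSpace ℝ E]
    [StrictConvexSpace ℝ E] {x z w : E} {a b : ℝ} (hz : ‖z‖ ≤ ‖x‖) (hw : ‖w‖ ≤ ‖x‖)
    (ha : 0 < a) (hb : 0 < b) (hab : a + b = 1) (hx : x = a • z + b • w) : z = x := by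
  have hzw : z = w := by
    by_contra hne
    have hlt := norm_combo_lt_of_ne hz hw hne ha hb hab
    rw [← hx] at hlt
    exact lt_irrefl _ hlt
  rw [hx, ← hzw, ← add_smul, hab, one_smul]

theorem inv_smul_eq_one_of_abs_homogeneous {E : Type*} [AddCommGroup E] [Module ℝ E]
    {N : E → ℝ} (N_smul : ∀ (c : ℝ) a, N (c • a) = |c| * N a) {c : ℝ} (hc : c ≠ 0) {v : E}
    (hv : N v = |c|) : N (c⁻¹ • v) = 1 := by
  rw [N_smul, hv, abs_inv, inv_mul_cancel₀ (abs_ne_zero.mpr hc)]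

theorem statement8_general (n : ℕ) (N : EuclideanSpace ℝ (Fin n) → ℝ)
    (N_smul : ∀ (c : ℝ) a, N (c • a) = |c| * N a)
    (x : EuclideanSpace ℝ (Fin n))
    (hmax : ∀ y, N y ≤ 1 → ‖y‖ ≤ ‖x‖)
    (C : ℝ) (hC : C ∈ Set.Ioo (0 : ℝ) 1)
    (y : EuclideanSpace ℝ (Fin n)) (hy : N y = C) (hyx : N (y - x) = 1 - C) :
    y = C • x := by
  obtain ⟨hC0, hC1⟩ := hC
  have hz : N (C⁻¹ • y) = 1 :=
    inv_smul_eq_one_of_abs_homogeneous N_smul hC0.ne' (by rw [hy, abs_of_pos hC0])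
  have hw : N ((C - 1)⁻¹ • (y - x)) = 1 :=
    inv_smul_eq_one_of_abs_homogeneous N_smul (by linarith)
      (by rw [hyx, abs_of_neg (by linarith)]; ring)
  have hcombo : x = C • (C⁻¹ • y) + (1 - C) • ((C - 1)⁻¹ • (y - x)) := by
    have hneg : (1 - C) * (C - 1)⁻¹ = -1 := by
      rw [← neg_sub, neg_mul, mul_inv_cancel₀ (by linarith)]
    rw [smul_smul, smul_smul, mul_inv_cancel₀ hC0.ne', hneg, one_smul, neg_one_smul]
    abel
  have hzx : C⁻¹ • y = x :=
    eq_of_eq_combo_of_norm_le (hmax _ hz.le) (hmax _ hw.le) hC0 (by linarith) (by ring) hcombo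
  rw [← hzx, smul_inv_smul₀ hC0.ne']

theorem statement8 (n : ℕ) (N : EuclideanSpace ℝ (Fin n) → ℝ)
    (N_add : ∀ a b, N (a + b) ≤ N a + N b)
    (N_smul : ∀ (c : ℝ) a, N (c • a) = |c| * N a)
    (N_def : ∀ a, N a = 0 → a = 0)
    (x : EuclideanSpace ℝ (Fin n)) (hx : N x = 1)
    (hmax : ∀ y, N y ≤ 1 → ‖y‖ ≤ ‖x‖)
    (C : ℝ) (hC : C ∈ Set.Ioo (0 : ℝ) 1)
    (y : EuclideanSpace ℝ (Fin n)) (hy : N y = C) (hyx : N (y - x) = 1 - C) :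
    y = C • x :=
  statement8_general n N N_smul x hmax C hC y hy hyx
end

section
/- Let n ∈ ℕ and let K ⊆ ℝⁿ be Lebesgue measurable with n-dimensional Lebesgue measure μ(K) = 1. Then the Lebesgue space L¹(K) (real-valued L¹ functions on K with respect to Lebesgue measure restricted to K, with the norm ‖f‖₁ = ∫_K |f| dμ) is a multigeodesic metric space. -/
open MeasureTheory

/-!
If `w = v - u` lies in the relative interior of a flat segment `{w + k • P : |k| ≤ 1}` of the
sphere of radius `‖w‖`, then besides the segment `t ↦ u + t • w`, the parabola
`t ↦ u + t • w + t (1 - t) • P` is a geodesic from `u` to `v`: the difference of two of its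
points is `(s - t) • (w + (1 - s - t) • P)`.

In `L¹(μ)` such a `P` is `(a - g) • w`, where `g` takes values in `[0, 1]` and `a` is the mean
of `g` with respect to the weight `|w|`: the factor `1 + k (a - g)` is nonnegative, so
`‖w + k • P‖ = ∫ |w| + k ∫ (a - g) |w| = ‖w‖`. If the level sets of `g` are null, then
`P ≠ 0`. On a subset of `ℝⁿ`, `n > 0`, take `g` to be the sigmoid of the first coordinate.
-/

section NormedSpace

variable {E : Type*} [NormedAddCommGroup E] [NormedSpace ℝ E]

theorem isGeodesic_add_smul_add_smul {u v P : E}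
    (hP : ∀ k : ℝ, |k| ≤ 1 → ‖(v - u) + k • P‖ = ‖v - u‖) :
    IsGeodesic u v fun t => u + (t : ℝ) • (v - u) + ((t : ℝ) * (1 - t)) • P := by
  refine ⟨by simp, by simp, fun s t => ?_⟩
  obtain ⟨hs0, hs1⟩ := s.2
  obtain ⟨ht0, ht1⟩ := t.2
  have hdiff : (u + (s : ℝ) • (v - u) + ((s : ℝ) * (1 - s)) • P)
      - (u + (t : ℝ) • (v - u) + ((t : ℝ) * (1 - t)) • P)
      = ((s : ℝ) - t) • ((v - u) + (1 - s - t : ℝ) • P) := by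
    module
  rw [dist_eq_norm, hdiff, norm_smul, Real.norm_eq_abs,
    hP _ (abs_le.mpr ⟨by linarith, by linarith⟩), dist_comm, dist_eq_norm]

theorem multigeodesic_of_forall_exists_flat
    (h : ∀ w : E, w ≠ 0 → ∃ P ≠ 0, ∀ k : ℝ, |k| ≤ 1 → ‖w + k • P‖ = ‖w‖) :
    Multigeodesic E := by
  intro u v huv
  obtain ⟨P, hP0, hP⟩ := h (v - u) (sub_ne_zero.mpr huv.symm)
  refine ⟨_, _, isGeodesic_add_smul_add_smul (P := 0) (by simp),
    isGeodesic_add_smul_add_smul hP, fun heq => hP0 ?_⟩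
  have hmid := congrFun heq ⟨1 / 2, by norm_num, by norm_num⟩
  norm_num at hmid
  exact hmid

end NormedSpace

namespace MeasureTheory.L1

variable {α : Type*} [MeasurableSpace α] {μ : Measure α}

theorem exists_mem_Icc_integral_sub_mul_eq_zero {g f : α → ℝ} (hgm : AEStronglyMeasurable g μ)
    (hg : ∀ x, g x ∈ Set.Icc (0 : ℝ) 1) (hf : Integrable f μ) (hf0 : ∀ x, 0 ≤ f x)
    (hpos : 0 < ∫ x, f x ∂μ) : ∃ a ∈ Set.Icc (0 : ℝ) 1, ∫ x, (a - g x) * f x ∂μ = 0 := by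
  have hgf : Integrable (fun x => g x * f x) μ :=
    hf.bdd_mul hgm (ae_of_all _ fun x => by simpa [abs_of_nonneg (hg x).1] using (hg x).2)
  refine ⟨(∫ x, g x * f x ∂μ) / ∫ x, f x ∂μ, ⟨?_, ?_⟩, ?_⟩
  · exact div_nonneg (integral_nonneg fun x => mul_nonneg (hg x).1 (hf0 x)) hpos.le
  · exact (div_le_one hpos).mpr
      (integral_mono hgf hf fun x => mul_le_of_le_one_left (hf0 x) (hg x).2)
  · simp_rw [sub_mul]
    rw [MeasureTheory.integral_sub (hf.const_mul _) hgf, integral_const_mul, div_mul_cancel₀ _ hpos.ne',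
      sub_self]

theorem norm_add_smul_eq_of_integral_mul_norm_eq_zero {h : α → ℝ}
    (hhm : AEStronglyMeasurable h μ) (hh : ∀ x, |h x| ≤ 1) {w P : Lp ℝ 1 μ}
    (hP : P =ᵐ[μ] fun x => h x * w x) (hmean : ∫ x, h x * ‖w x‖ ∂μ = 0) {k : ℝ}
    (hk : |k| ≤ 1) : ‖w + k • P‖ = ‖w‖ := by
  have hw := (L1.integrable_coeFn w).norm
  have hweight : ∀ x, 0 ≤ 1 + k * h x := fun x => by
    have := abs_mul k (h x) ▸ mul_le_one₀ hk (abs_nonneg _) (hh x)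
    linarith [neg_abs_le (k * h x)]
  have hpoint : ∀ᵐ x ∂μ, ‖(w + k • P) x‖ = ‖w x‖ + k * (h x * ‖w x‖) := by
    filter_upwards [Lp.coeFn_add w (k • P), Lp.coeFn_smul k P, hP] with x h1 h2 h3
    rw [h1, Pi.add_apply, h2, Pi.smul_apply, h3, smul_eq_mul,
      show w x + k * (h x * w x) = (1 + k * h x) * w x by ring, norm_mul,
      Real.norm_of_nonneg (hweight x)]
    ring
  rw [L1.norm_eq_integral_norm, L1.norm_eq_integral_norm, integral_congr_ae hpoint,
    MeasureTheory.integral_add hw ((hw.bdd_mul hhm (ae_of_all _ hh)).const_mul k), integral_const_mul, hmean,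
    mul_zero, add_zero]

theorem exists_flat_perturbation {g : α → ℝ} (hgm : AEStronglyMeasurable g μ)
    (hg : ∀ x, g x ∈ Set.Icc (0 : ℝ) 1) (hlevel : ∀ c : ℝ, ∀ᵐ x ∂μ, g x ≠ c)
    {w : Lp ℝ 1 μ} (hw : w ≠ 0) :
    ∃ P ≠ 0, ∀ k : ℝ, |k| ≤ 1 → ‖w + k • P‖ = ‖w‖ := by
  have hwi := L1.integrable_coeFn w
  have hpos : 0 < ∫ x, ‖w x‖ ∂μ := L1.norm_eq_integral_norm w ▸ norm_pos_iff.mpr hw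
  obtain ⟨a, ⟨ha0, ha1⟩, hmean⟩ :=
    exists_mem_Icc_integral_sub_mul_eq_zero hgm hg hwi.norm (fun x => norm_nonneg _) hpos
  have hhm : AEStronglyMeasurable (fun x => a - g x) μ := aestronglyMeasurable_const.sub hgm
  have hh : ∀ x, |a - g x| ≤ 1 := fun x =>
    abs_le.mpr ⟨by linarith [(hg x).2], by linarith [(hg x).1]⟩
  have hP : MemLp (fun x => (a - g x) * w x) 1 μ :=
    memLp_one_iff_integrable.mpr (hwi.bdd_mul hhm (ae_of_all _ hh))
  refine ⟨hP.toLp _, fun hP0 => hw ?_, fun k hk =>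
    norm_add_smul_eq_of_integral_mul_norm_eq_zero hhm hh hP.coeFn_toLp hmean hk⟩
  rw [Lp.eq_zero_iff_ae_eq_zero] at hP0 ⊢
  filter_upwards [hP.coeFn_toLp.symm.trans hP0, hlevel a] with x hx hga
  exact (mul_eq_zero.mp hx).resolve_left (sub_ne_zero.mpr hga.symm)

theorem multigeodesic_of_level_sets_null {g : α → ℝ} (hgm : AEStronglyMeasurable g μ)
    (hg : ∀ x, g x ∈ Set.Icc (0 : ℝ) 1) (hlevel : ∀ c : ℝ, ∀ᵐ x ∂μ, g x ≠ c) :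
    Multigeodesic (Lp ℝ 1 μ) :=
  multigeodesic_of_forall_exists_flat fun _ hw => exists_flat_perturbation hgm hg hlevel hw

end MeasureTheory.L1

theorem ae_comp_eval_ne {ι : Type*} [Fintype ι] (i : ι) {f : ℝ → ℝ}
    (hf : Function.Injective f) (c : ℝ) : ∀ᵐ x : ι → ℝ, f (x i) ≠ c := by
  by_cases hc : c ∈ Set.range f
  · obtain ⟨r, rfl⟩ := hc
    filter_upwards [Measure.ae_eval_ne (fun _ : ι => (volume : Measure ℝ)) i r] with x hx
    exact hf.ne hx
  · exact ae_of_all _ fun x hx => hc ⟨x i, hx⟩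

theorem statement9_general (n : ℕ) (hn : 0 < n) (K : Set (Fin n → ℝ)) :
    Multigeodesic (Lp ℝ 1 (volume.restrict K)) :=
  L1.multigeodesic_of_level_sets_null (g := fun x => Real.sigmoid (x ⟨0, hn⟩))
    (differentiable_sigmoid.continuous.comp (continuous_apply _)).aestronglyMeasurable
    (fun _ => ⟨Real.sigmoid_nonneg _, Real.sigmoid_le_one _⟩)
    fun c => ae_restrict_of_ae (ae_comp_eval_ne _ Real.sigmoid_injective c)

theorem statement9 (n : ℕ) (hn : 0 < n) (K : Set (Fin n → ℝ))
    (hK : MeasurableSet K) (hvol : volume K = 1) :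
    Multigeodesic (Lp ℝ 1 (volume.restrict K)) :=
  statement9_general n hn K
end

section
/- Let (X, d) be a multigeodesic metric space, let γ : [0,1] → X be a geodesic from γ(0) to γ(1) with γ(0) ≠ γ(1), and let t ∈ (0,1). Then there exists a geodesic τ : [0,1] → X from γ(0) to γ(1) such that inf{ s ∈ (0,1) : τ(s) ≠ γ(s) } = t. -/
open Set Function

section Halving

noncomputable def halving (t : ℝ) (n : ℕ) : ℝ := t + (1 - t) / 2 ^ n

theorem halving_zero (t : ℝ) : halving t 0 = 1 := by simp [halving]

variable {t : ℝ}

theorem lt_halving (ht : t < 1) (n : ℕ) : t < halving t n :=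
  lt_add_of_pos_right t (div_pos (sub_pos.mpr ht) (by positivity))

theorem strictAnti_halving (ht : t < 1) : StrictAnti (halving t) :=
  strictAnti_nat_of_succ_lt fun n => by
    have : 0 < 1 - t := sub_pos.mpr ht
    unfold halving
    gcongr <;> norm_num

theorem halving_mem_Icc (ht0 : 0 ≤ t) (ht : t < 1) (n : ℕ) : halving t n ∈ Icc (0 : ℝ) 1 :=
  ⟨ht0.trans (lt_halving ht n).le,
    halving_zero t ▸ (strictAnti_halving ht).antitone (Nat.zero_le n)⟩

theorem exists_halving_lt {w : ℝ} (hw : t < w) : ∃ n, halving t n < w := by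
  have hlim : Filter.Tendsto (halving t) Filter.atTop (nhds (t + 0)) :=
    tendsto_const_nhds.add
      (tendsto_const_nhds.div_atTop (tendsto_pow_atTop_atTop_of_one_lt one_lt_two))
  rw [add_zero] at hlim
  exact (hlim.eventually (gt_mem_nhds hw)).exists

theorem pairwise_disjoint_Ioc_halving (ht : t < 1) :
    Pairwise (Disjoint on fun n => Ioc (halving t (n + 1)) (halving t n)) := by
  simpa only [Order.succ_eq_add_one] using
    (strictAnti_halving ht).antitone.pairwise_disjoint_on_Ioc_succ

end Halving

section Glue

variable {α ι : Type*}

open Classical in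
noncomputable def glueIoc (g : ℝ → α) (p q : ι → ℝ) (e : ι → ℝ → α) (x : ℝ) : α :=
  if h : ∃ i, x ∈ Ioc (p i) (q i) then e h.choose x else g x

variable {g : ℝ → α} {p q : ι → ℝ} {e : ι → ℝ → α}

theorem eq_of_mem_Ioc_of_mem_Ioc (hdisj : Pairwise (Disjoint on fun i => Ioc (p i) (q i)))
    {i j : ι} {x : ℝ} (hi : x ∈ Ioc (p i) (q i)) (hj : x ∈ Ioc (p j) (q j)) : i = j :=
  hdisj.eq (not_disjoint_iff.mpr ⟨x, hi, hj⟩)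

theorem glueIoc_of_mem (hdisj : Pairwise (Disjoint on fun i => Ioc (p i) (q i))) {i : ι} {x : ℝ}
    (hx : x ∈ Ioc (p i) (q i)) : glueIoc g p q e x = e i x := by
  have h : ∃ i, x ∈ Ioc (p i) (q i) := ⟨i, hx⟩
  rw [glueIoc, dif_pos h, eq_of_mem_Ioc_of_mem_Ioc hdisj h.choose_spec hx]

theorem glueIoc_of_forall_notMem {x : ℝ} (hx : ∀ i, x ∉ Ioc (p i) (q i)) :
    glueIoc g p q e x = g x :=
  dif_neg (not_exists.mpr hx)

end Glue

section Reparam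

variable {α : Type*}

noncomputable def reparam (δ : unitInterval → α) (p q x : ℝ) : α :=
  IccExtend zero_le_one δ ((x - p) / (q - p))

theorem reparam_add_mul (δ : unitInterval → α) {p q : ℝ} (hpq : p ≠ q) (s : unitInterval) :
    reparam δ p q (p + s * (q - p)) = δ s := by
  rw [reparam, add_sub_cancel_left, mul_div_cancel_right₀ _ (sub_ne_zero.mpr hpq.symm),
    IccExtend_val]

theorem reparam_left (δ : unitInterval → α) {p q : ℝ} (hpq : p ≠ q) : reparam δ p q p = δ 0 := by
  simpa using reparam_add_mul δ hpq 0

theorem reparam_right (δ : unitInterval → α) {p q : ℝ} (hpq : p ≠ q) : reparam δ p q q = δ 1 := by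
  simpa using reparam_add_mul δ hpq 1

end Reparam

section Splice

variable {α : Type*}

noncomputable def spliceHalving (γ : unitInterval → α) (t : ℝ) (δ : ℕ → unitInterval → α) :
    ℝ → α :=
  glueIoc (IccExtend zero_le_one γ) (fun n => halving t (n + 1)) (halving t)
    (fun n => reparam (δ n) (halving t (n + 1)) (halving t n))

variable {γ : unitInterval → α} {t : ℝ} {δ : ℕ → unitInterval → α}

theorem spliceHalving_of_le (ht : t < 1) {x : ℝ} (hx : x ≤ t) :
    spliceHalving γ t δ x = IccExtend zero_le_one γ x :=
  glueIoc_of_forall_notMem fun n hn => (hx.trans_lt (lt_halving ht (n + 1))).not_ge hn.1.le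

theorem spliceHalving_add_mul (ht : t < 1) (n : ℕ) {s : unitInterval} (hs : 0 < (s : ℝ)) :
    spliceHalving γ t δ (halving t (n + 1) + s * (halving t n - halving t (n + 1))) = δ n s := by
  have hlt : halving t (n + 1) < halving t n := strictAnti_halving ht n.lt_succ_self
  have hmem : halving t (n + 1) + s * (halving t n - halving t (n + 1)) ∈
      Ioc (halving t (n + 1)) (halving t n) :=
    ⟨by nlinarith, by nlinarith [s.2.2]⟩
  rw [spliceHalving, glueIoc_of_mem (pairwise_disjoint_Ioc_halving ht) hmem,
    reparam_add_mul _ hlt.ne]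

end Splice

section Geodesic

variable {X : Type*} [MetricSpace X]

namespace IsGeodesic

variable {u v : X} {γ : unitInterval → X}

theorem of_dist_le_s13 (h0 : γ 0 = u) (h1 : γ 1 = v)
    (hγ : ∀ s r : unitInterval, dist (γ s) (γ r) ≤ |(s : ℝ) - r| * dist u v) :
    IsGeodesic u v γ := by
  refine ⟨h0, h1, fun s r => ?_⟩
  wlog hsr : (s : ℝ) ≤ r generalizing s r
  · rw [dist_comm, abs_sub_comm]
    exact this r s (le_of_not_ge hsr)
  refine (hγ s r).antisymm ?_
  have h0s := hγ 0 s
  have hr1 := hγ r 1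
  have htri := dist_triangle4 u (γ s) (γ r) v
  rw [h0] at h0s
  rw [h1] at hr1
  simp only [Icc.coe_zero, Icc.coe_one, zero_sub, abs_neg] at h0s hr1
  rw [abs_of_nonneg s.2.1] at h0s
  rw [abs_of_nonpos (sub_nonpos.mpr r.2.2)] at hr1
  rw [abs_of_nonpos (sub_nonpos.mpr hsr)]
  linarith

theorem dist_IccExtend (hγ : IsGeodesic u v γ) {x y : ℝ} (hx : x ∈ Icc (0 : ℝ) 1)
    (hy : y ∈ Icc (0 : ℝ) 1) :
    dist (IccExtend zero_le_one γ x) (IccExtend zero_le_one γ y) = |x - y| * dist u v := by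
  rw [IccExtend_of_mem _ _ hx, IccExtend_of_mem _ _ hy]
  exact hγ.2.2 _ _

theorem dist_IccExtend_le (hγ : IsGeodesic u v γ) (x y : ℝ) :
    dist (IccExtend zero_le_one γ x) (IccExtend zero_le_one γ y) ≤ |x - y| * dist u v := by
  simp only [IccExtend, comp_apply, hγ.2.2]
  exact mul_le_mul_of_nonneg_right (abs_projIcc_sub_projIcc _) dist_nonneg

theorem IccExtend_ne (hγ : IsGeodesic u v γ) (huv : u ≠ v) {x y : ℝ} (hx : x ∈ Icc (0 : ℝ) 1)
    (hy : y ∈ Icc (0 : ℝ) 1) (hxy : x ≠ y) :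
    IccExtend zero_le_one γ x ≠ IccExtend zero_le_one γ y := by
  rw [← dist_pos, hγ.dist_IccExtend hx hy]
  exact mul_pos (abs_pos.mpr (sub_ne_zero.mpr hxy)) (dist_pos.mpr huv)

theorem subsegment (hγ : IsGeodesic u v γ) {p q : ℝ} (hp : p ∈ Icc (0 : ℝ) 1)
    (hq : q ∈ Icc (0 : ℝ) 1) :
    IsGeodesic (IccExtend zero_le_one γ p) (IccExtend zero_le_one γ q)
      (fun s : unitInterval => IccExtend zero_le_one γ (p + s * (q - p))) := by
  have hmem (s : unitInterval) : p + s * (q - p) ∈ Icc (0 : ℝ) 1 :=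
    (convex_Icc 0 1).add_smul_sub_mem hp hq s.2
  refine ⟨by simp, by simp, fun s r => ?_⟩
  rw [hγ.dist_IccExtend (hmem s) (hmem r), hγ.dist_IccExtend hp hq,
    show p + s * (q - p) - (p + r * (q - p)) = (s - r) * (q - p) by ring, abs_mul,
    abs_sub_comm q p, mul_assoc]

theorem exists_ne_of_ne {σ : unitInterval → X} (hγ : IsGeodesic u v γ) (hσ : IsGeodesic u v σ)
    (hne : γ ≠ σ) : ∃ s : unitInterval, 0 < (s : ℝ) ∧ (s : ℝ) < 1 ∧ γ s ≠ σ s := by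
  obtain ⟨s, hs⟩ := ne_iff.mp hne
  refine ⟨s, unitInterval.pos_iff_ne_zero.mpr ?_, unitInterval.lt_one_iff_ne_one.mpr ?_, hs⟩
  · rintro rfl
    exact hs (hγ.1.trans hσ.1.symm)
  · rintro rfl
    exact hs (hγ.2.1.trans hσ.2.1.symm)

theorem dist_reparam_le {u v : X} {δ : unitInterval → X} (hδ : IsGeodesic u v δ)
    {p q D : ℝ} (hpq : p < q) (huv : dist u v = (q - p) * D) (x y : ℝ) :
    dist (reparam δ p q x) (reparam δ p q y) ≤ |x - y| * D := by
  have hqp : 0 < q - p := sub_pos.mpr hpq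
  calc dist (reparam δ p q x) (reparam δ p q y)
      ≤ |(x - p) / (q - p) - (y - p) / (q - p)| * dist u v := hδ.dist_IccExtend_le _ _
    _ = |x - y| * D := by
        rw [← sub_div, sub_sub_sub_cancel_right, abs_div, abs_of_pos hqp, huv]
        field_simp

end IsGeodesic

theorem Multigeodesic.exists_isGeodesic_ne (hX : Multigeodesic X) {u v : X} (huv : u ≠ v)
    {ρ : unitInterval → X} (hρ : IsGeodesic u v ρ) :
    ∃ δ, IsGeodesic u v δ ∧ ∃ s : unitInterval, 0 < (s : ℝ) ∧ (s : ℝ) < 1 ∧ δ s ≠ ρ s := by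
  obtain ⟨γ, σ, hγ, hσ, hγσ⟩ := hX u v huv
  by_cases h : γ = ρ
  · exact ⟨σ, hσ, hσ.exists_ne_of_ne hρ (h ▸ hγσ.symm)⟩
  · exact ⟨γ, hγ, hγ.exists_ne_of_ne hρ h⟩

section Glue

variable {ι : Type*} {g : ℝ → X} {p q : ι → ℝ} {e : ι → ℝ → X} {D : ℝ}

theorem dist_base_glueIoc_le (hdisj : Pairwise (Disjoint on fun i => Ioc (p i) (q i)))
    (hg : ∀ x y, dist (g x) (g y) ≤ |x - y| * D) (he : ∀ i x y, dist (e i x) (e i y) ≤ |x - y| * D)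
    (hp : ∀ i, e i (p i) = g (p i)) {a y : ℝ} (hay : a ≤ y)
    (ha : ∀ j, y ∈ Ioc (p j) (q j) → a ≤ p j) : dist (g a) (glueIoc g p q e y) ≤ (y - a) * D := by
  by_cases hy : ∃ j, y ∈ Ioc (p j) (q j)
  · obtain ⟨j, hj⟩ := hy
    rw [glueIoc_of_mem hdisj hj]
    calc dist (g a) (e j y) ≤ dist (g a) (g (p j)) + dist (e j (p j)) (e j y) := by
          rw [hp j]; exact dist_triangle _ _ _
      _ ≤ |a - p j| * D + |p j - y| * D := add_le_add (hg _ _) (he _ _ _)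
      _ = (y - a) * D := by
          rw [abs_of_nonpos (sub_nonpos.mpr (ha j hj)), abs_of_nonpos (sub_nonpos.mpr hj.1.le)]
          ring
  · rw [glueIoc_of_forall_notMem (not_exists.mp hy)]
    simpa only [abs_of_nonpos (sub_nonpos.mpr hay), neg_sub] using hg a y

theorem dist_glueIoc_base_le (hdisj : Pairwise (Disjoint on fun i => Ioc (p i) (q i)))
    (hg : ∀ x y, dist (g x) (g y) ≤ |x - y| * D) (he : ∀ i x y, dist (e i x) (e i y) ≤ |x - y| * D)
    (hq : ∀ i, e i (q i) = g (q i)) {x a : ℝ} (hxa : x ≤ a)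
    (ha : ∀ i, x ∈ Ioc (p i) (q i) → q i ≤ a) : dist (glueIoc g p q e x) (g a) ≤ (a - x) * D := by
  by_cases hx : ∃ i, x ∈ Ioc (p i) (q i)
  · obtain ⟨i, hi⟩ := hx
    rw [glueIoc_of_mem hdisj hi]
    calc dist (e i x) (g a) ≤ dist (e i x) (e i (q i)) + dist (g (q i)) (g a) := by
          rw [hq i]; exact dist_triangle _ _ _
      _ ≤ |x - q i| * D + |q i - a| * D := add_le_add (he _ _ _) (hg _ _)
      _ = (a - x) * D := by
          rw [abs_of_nonpos (sub_nonpos.mpr hi.2), abs_of_nonpos (sub_nonpos.mpr (ha i hi))]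
          ring
  · rw [glueIoc_of_forall_notMem (not_exists.mp hx)]
    simpa only [abs_of_nonpos (sub_nonpos.mpr hxa), neg_sub] using hg x a

theorem dist_glueIoc_le (hdisj : Pairwise (Disjoint on fun i => Ioc (p i) (q i)))
    (hg : ∀ x y, dist (g x) (g y) ≤ |x - y| * D) (he : ∀ i x y, dist (e i x) (e i y) ≤ |x - y| * D)
    (hp : ∀ i, e i (p i) = g (p i)) (hq : ∀ i, e i (q i) = g (q i))
    (x y : ℝ) : dist (glueIoc g p q e x) (glueIoc g p q e y) ≤ |x - y| * D := by
  wlog hxy : x ≤ y generalizing x y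
  · rw [dist_comm, abs_sub_comm]
    exact this y x (le_of_not_ge hxy)
  rw [abs_of_nonpos (sub_nonpos.mpr hxy), neg_sub]
  by_cases hx : ∃ i, x ∈ Ioc (p i) (q i)
  · obtain ⟨i, hi⟩ := hx
    rcases le_or_gt y (q i) with hyi | hyi
    · rw [glueIoc_of_mem hdisj hi, glueIoc_of_mem hdisj ⟨hi.1.trans_le hxy, hyi⟩]
      simpa only [abs_of_nonpos (sub_nonpos.mpr hxy), neg_sub] using he i x y
    have hqi : q i ∈ Ioc (p i) (q i) := ⟨hi.1.trans_le hi.2, le_rfl⟩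
    have hleft : ∀ j, y ∈ Ioc (p j) (q j) → q i ≤ p j := by
      intro j hj
      by_contra! h
      obtain rfl : i = j := eq_of_mem_Ioc_of_mem_Ioc hdisj hqi ⟨h, hyi.le.trans hj.2⟩
      exact hyi.not_ge hj.2
    have hright : ∀ i', x ∈ Ioc (p i') (q i') → q i' ≤ q i := fun i' hi' =>
      eq_of_mem_Ioc_of_mem_Ioc hdisj hi' hi ▸ le_rfl
    calc dist (glueIoc g p q e x) (glueIoc g p q e y)
        ≤ dist (glueIoc g p q e x) (g (q i)) + dist (g (q i)) (glueIoc g p q e y) :=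
          dist_triangle _ _ _
      _ ≤ (q i - x) * D + (y - q i) * D :=
          add_le_add (dist_glueIoc_base_le hdisj hg he hq hi.2 hright)
            (dist_base_glueIoc_le hdisj hg he hp hyi.le hleft)
      _ = (y - x) * D := by ring
  · rw [glueIoc_of_forall_notMem (not_exists.mp hx)]
    exact dist_base_glueIoc_le hdisj hg he hp hxy fun j hj => le_of_not_gt fun h =>
      hx ⟨j, h, hxy.trans hj.2⟩

end Glue

theorem isGeodesic_spliceHalving {u v : X} {γ : unitInterval → X} {t : ℝ}
    {δ : ℕ → unitInterval → X} (hγ : IsGeodesic u v γ) (ht0 : 0 ≤ t) (ht : t < 1)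
    (hδ : ∀ n, IsGeodesic (IccExtend zero_le_one γ (halving t (n + 1)))
      (IccExtend zero_le_one γ (halving t n)) (δ n)) :
    IsGeodesic u v (fun s : unitInterval => spliceHalving γ t δ s) := by
  have hm := halving_mem_Icc ht0 ht
  have hlt (n : ℕ) : halving t (n + 1) < halving t n := strictAnti_halving ht n.lt_succ_self
  have hdδ (n : ℕ) : dist (IccExtend zero_le_one γ (halving t (n + 1)))
      (IccExtend zero_le_one γ (halving t n)) = (halving t n - halving t (n + 1)) * dist u v := by
    rw [hγ.dist_IccExtend (hm _) (hm _), abs_sub_comm, abs_of_pos (sub_pos.mpr (hlt n))]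
  have hdist := dist_glueIoc_le (pairwise_disjoint_Ioc_halving ht) hγ.dist_IccExtend_le
    (fun n => (hδ n).dist_reparam_le (hlt n) (hdδ n))
    (fun n => (reparam_left _ (hlt n).ne).trans (hδ n).1)
    (fun n => (reparam_right _ (hlt n).ne).trans (hδ n).2.1)
  refine .of_dist_le ?_ ?_ fun s r => hdist s r
  · rw [Icc.coe_zero, spliceHalving_of_le ht ht0, IccExtend_left]
    exact hγ.1
  · have h1 : (1 : ℝ) ∈ Ioc (halving t (0 + 1)) (halving t 0) :=
      ⟨by simpa only [halving_zero] using hlt 0, (halving_zero t).ge⟩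
    rw [Icc.coe_one, spliceHalving, glueIoc_of_mem (pairwise_disjoint_Ioc_halving ht) h1,
      ← halving_zero t, reparam_right _ (hlt 0).ne, (hδ 0).2.1, halving_zero, IccExtend_right]
    exact hγ.2.1

end Geodesic

theorem statement13 {X : Type*} [MetricSpace X] (hX : Multigeodesic X)
    (γ : unitInterval → X) (hγ : IsGeodesic (γ 0) (γ 1) γ) (hne : γ 0 ≠ γ 1)
    (t : ℝ) (ht : t ∈ Set.Ioo (0 : ℝ) 1) :
    ∃ τ : unitInterval → X, IsGeodesic (γ 0) (γ 1) τ ∧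
      sInf (Subtype.val '' {s : unitInterval | 0 < (s : ℝ) ∧ (s : ℝ) < 1 ∧ τ s ≠ γ s}) = t := by
  obtain ⟨ht0, ht1⟩ := ht
  have hm := halving_mem_Icc ht0.le ht1
  have hlt (n : ℕ) : halving t (n + 1) < halving t n := strictAnti_halving ht1 n.lt_succ_self
  choose δ hδ s hs0 hs1 hδs using fun n => hX.exists_isGeodesic_ne
    (hγ.IccExtend_ne hne (hm (n + 1)) (hm n) (hlt n).ne) (hγ.subsegment (hm (n + 1)) (hm n))
  refine ⟨_, isGeodesic_spliceHalving hγ ht0.le ht1 hδ, ?_⟩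
  set S := Subtype.val '' {r : unitInterval | 0 < (r : ℝ) ∧ (r : ℝ) < 1 ∧
    spliceHalving γ t δ r ≠ γ r}
  have hleave (n : ℕ) : ∃ x ∈ S, x < halving t n := by
    set x := halving t (n + 1) + s n * (halving t n - halving t (n + 1)) with hx
    have hx₁ : halving t (n + 1) < x := by nlinarith [hs0 n, hlt n]
    have hx₂ : x < halving t n := by nlinarith [hs1 n, hlt n]
    have hx₀₁ : x ∈ Icc (0 : ℝ) 1 := ⟨(hm _).1.trans hx₁.le, hx₂.le.trans (hm n).2⟩
    have hxne : spliceHalving γ t δ x ≠ IccExtend zero_le_one γ x := by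
      rw [hx, spliceHalving_add_mul ht1 n (hs0 n)]
      exact hδs n
    rw [IccExtend_of_mem zero_le_one γ hx₀₁] at hxne
    exact ⟨x, ⟨⟨x, hx₀₁⟩, ⟨(hm _).1.trans_lt hx₁, hx₂.trans_le (hm n).2, hxne⟩, rfl⟩, hx₂⟩
  refine csInf_eq_of_forall_ge_of_forall_gt_exists_lt ?_ ?_ fun w hw => ?_
  · obtain ⟨x, hx, -⟩ := hleave 0
    exact ⟨x, hx⟩
  · rintro _ ⟨r, ⟨-, -, hr⟩, rfl⟩
    by_contra! h
    exact hr ((spliceHalving_of_le ht1 h.le).trans (IccExtend_val _ _ r))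
  · obtain ⟨n, hn⟩ := exists_halving_lt hw
    obtain ⟨x, hx, hxn⟩ := hleave n
    exact ⟨x, hx, hxn.trans hn⟩
end

section
/- Let (X, d) be a multigeodesic metric space and let u, v ∈ X be distinct. Then the set of geodesics from u to v is uncountable. -/
/-!
Fix a geodesic `γ` from `u` to `v`. Its points at times `2⁻ⁿ⁻¹` and `2⁻ⁿ` are distinct, so they are
joined by two distinct geodesics; choosing one of the two independently for every `n` and splicing
the choices into `γ` over `[2⁻ⁿ⁻¹, 2⁻ⁿ]` gives a different path for every `A ⊆ ℕ`. Each spliced path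
is `d(u, v)`-Lipschitz, since the pieces glue at their common endpoints and accumulate only at `0`,
where the path agrees with `γ`; and a `d(u, v)`-Lipschitz path from `u` to `v` is a geodesic.
-/

open Set Function

section Geodesic

variable {X : Type*} [MetricSpace X] {u v : X} {γ : unitInterval → X}

theorem IsGeodesic.dist_eq (hγ : IsGeodesic u v γ) (s t : unitInterval) :
    dist (γ s) (γ t) = dist u v * dist s t := by
  rw [hγ.2.2, Subtype.dist_eq, Real.dist_eq, mul_comm]

/-- The triangle inequality along `u, γ s, γ t, v` forces the Lipschitz bound to be an equality. -/
theorem isGeodesic_of_lipschitzWith (h0 : γ 0 = u) (h1 : γ 1 = v)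
    (hγ : LipschitzWith (nndist u v) γ) : IsGeodesic u v γ := by
  have hle (s t : unitInterval) : dist (γ s) (γ t) ≤ dist u v * |(s : ℝ) - t| := by
    simpa [Subtype.dist_eq, Real.dist_eq] using hγ.dist_le_mul s t
  have key (s t : unitInterval) (hst : (s : ℝ) ≤ t) : dist (γ s) (γ t) = (t - s) * dist u v := by
    refine le_antisymm ?_ ?_
    · simpa [abs_of_nonpos (sub_nonpos.2 hst), mul_comm] using hle s t
    · have h0s := hle 0 s
      have ht1 := hle t 1
      simp only [h0, h1, Icc.coe_zero, Icc.coe_one, zero_sub, abs_neg, abs_of_nonneg s.2.1,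
        abs_of_nonpos (sub_nonpos.2 t.2.2)] at h0s ht1
      linarith [dist_triangle4 u (γ s) (γ t) v]
  refine ⟨h0, h1, fun s t => ?_⟩
  rcases le_total (s : ℝ) t with hst | hts
  · rw [key s t hst, abs_of_nonpos (sub_nonpos.2 hst), neg_sub]
  · rw [dist_comm, key t s hts, abs_of_nonneg (sub_nonneg.2 hts)]

theorem IsGeodesic.dist_IccExtend_s14 (hγ : IsGeodesic u v γ) {s t : ℝ} (hs : s ∈ Icc 0 1)
    (ht : t ∈ Icc 0 1) :
    dist (IccExtend zero_le_one γ s) (IccExtend zero_le_one γ t) = dist u v * dist s t := by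
  rw [IccExtend_of_mem _ _ hs, IccExtend_of_mem _ _ ht, hγ.dist_eq, Subtype.dist_eq]

end Geodesic

theorem LipschitzOnWith.congr {α β : Type*} [PseudoEMetricSpace α] [PseudoEMetricSpace β]
    {K : NNReal} {f g : α → β} {s : Set α} (hf : LipschitzOnWith K f s) (h : EqOn f g s) :
    LipschitzOnWith K g s := fun x hx y hy => by
  rw [← h hx, ← h hy]
  exact hf hx hy

theorem LipschitzOnWith.union_of_le {Y : Type*} [PseudoMetricSpace Y] {f : ℝ → Y} {K : NNReal}
    {s t : Set ℝ} {b : ℝ} (hs : LipschitzOnWith K f s) (ht : LipschitzOnWith K f t)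
    (hbs : b ∈ s) (hbt : b ∈ t) (hs_le : ∀ x ∈ s, x ≤ b) (ht_ge : ∀ y ∈ t, b ≤ y) :
    LipschitzOnWith K f (s ∪ t) := by
  have glue : ∀ x ∈ s, ∀ y ∈ t, dist (f x) (f y) ≤ K * dist x y := fun x hx y hy =>
    calc dist (f x) (f y) ≤ dist (f x) (f b) + dist (f b) (f y) := dist_triangle _ _ _
      _ ≤ K * dist x b + K * dist b y :=
        add_le_add (hs.dist_le_mul x hx b hbs) (ht.dist_le_mul b hbt y hy)
      _ = K * dist x y := by
        have hxy := (hs_le x hx).trans (ht_ge y hy)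
        rw [Real.dist_eq, Real.dist_eq, Real.dist_eq, abs_of_nonpos (sub_nonpos.2 (hs_le x hx)),
          abs_of_nonpos (sub_nonpos.2 (ht_ge y hy)), abs_of_nonpos (sub_nonpos.2 hxy)]
        ring
  refine LipschitzOnWith.of_dist_le_mul fun x hx y hy => ?_
  rcases hx with hx | hx <;> rcases hy with hy | hy
  · exact hs.dist_le_mul x hx y hy
  · exact glue x hx y hy
  · rw [dist_comm, dist_comm x]; exact glue y hy x hx
  · exact ht.dist_le_mul x hx y hy

section Rescale

variable {a b : ℝ}

noncomputable def unitRescale (a b t : ℝ) : unitInterval :=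
  projIcc 0 1 zero_le_one ((t - a) / (b - a))

theorem unitRescale_left (a b : ℝ) : unitRescale a b a = 0 := by
  simp [unitRescale]

theorem unitRescale_right (hab : a < b) : unitRescale a b b = 1 := by
  simp [unitRescale, div_self (sub_pos.2 hab).ne']

theorem surjOn_unitRescale (hab : a < b) : SurjOn (unitRescale a b) (Icc a b) univ := by
  intro s _
  have hba := sub_pos.2 hab
  refine ⟨a + s * (b - a), ⟨?_, ?_⟩, ?_⟩
  · nlinarith [unitInterval.nonneg s]
  · nlinarith [unitInterval.le_one s]
  · simp [unitRescale, hba.ne']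

theorem dist_unitRescale_le (hab : a < b) (s t : ℝ) :
    dist (unitRescale a b s) (unitRescale a b t) ≤ dist s t / (b - a) := by
  have hba := sub_pos.2 hab
  calc dist (unitRescale a b s) (unitRescale a b t)
      ≤ 1 * dist ((s - a) / (b - a)) ((t - a) / (b - a)) :=
        (LipschitzWith.projIcc zero_le_one).dist_le_mul _ _
    _ = dist s t / (b - a) := by
        rw [one_mul, Real.dist_eq, Real.dist_eq, ← sub_div, abs_div, abs_of_pos hba]
        ring_nf

variable {X : Type*} [MetricSpace X]

theorem IsGeodesic.lipschitzWith_comp_unitRescale {x y : X} {σ : unitInterval → X}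
    (hσ : IsGeodesic x y σ) (hab : a < b) {K : NNReal} (hxy : dist x y = K * (b - a)) :
    LipschitzWith K (σ ∘ unitRescale a b) := by
  refine LipschitzWith.of_dist_le_mul fun s t => ?_
  calc dist (σ (unitRescale a b s)) (σ (unitRescale a b t))
      = K * (b - a) * dist (unitRescale a b s) (unitRescale a b t) := by rw [hσ.dist_eq, hxy]
    _ ≤ K * (b - a) * (dist s t / (b - a)) := by
        gcongr
        exact dist_unitRescale_le hab s t
    _ = K * dist s t := by field_simp [(sub_pos.2 hab).ne']

end Rescale

section DyadicSplice

variable {Y : Type*} {g : ℝ → Y} {p : ℕ → ℝ → Y}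

theorem two_inv_pow_mem_Icc (n : ℕ) : (2⁻¹ : ℝ) ^ n ∈ Icc (0 : ℝ) 1 :=
  ⟨by positivity, pow_le_one₀ (by norm_num) (by norm_num)⟩

theorem two_inv_pow_succ_lt (n : ℕ) : (2⁻¹ : ℝ) ^ (n + 1) < 2⁻¹ ^ n :=
  pow_lt_pow_right_of_lt_one₀ (by norm_num) (by norm_num) n.lt_succ_self

theorem antitone_two_inv_pow : Antitone fun n : ℕ => (2⁻¹ : ℝ) ^ n :=
  fun _ _ h => pow_le_pow_of_le_one (by norm_num) (by norm_num) h

open Classical in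
noncomputable def dyadicSplice (g : ℝ → Y) (p : ℕ → ℝ → Y) (t : ℝ) : Y :=
  if h : ∃ n, t ∈ Ioc ((2⁻¹ : ℝ) ^ (n + 1)) (2⁻¹ ^ n) then p h.choose t else g t

theorem dyadicSplice_of_mem {n : ℕ} {t : ℝ} (ht : t ∈ Ioc ((2⁻¹ : ℝ) ^ (n + 1)) (2⁻¹ ^ n)) :
    dyadicSplice g p t = p n t := by
  have h : ∃ n, t ∈ Ioc ((2⁻¹ : ℝ) ^ (n + 1)) (2⁻¹ ^ n) := ⟨n, ht⟩
  rw [dyadicSplice, dif_pos h]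
  congr
  by_contra hne
  exact disjoint_left.1 (antitone_two_inv_pow.pairwise_disjoint_on_Ioc_succ hne) h.choose_spec ht

theorem dyadicSplice_zero : dyadicSplice g p 0 = g 0 := by
  rw [dyadicSplice, dif_neg]
  rintro ⟨n, hn, -⟩
  exact (pow_pos (by norm_num) (n + 1)).not_gt hn

variable (hleft : ∀ n, p n (2⁻¹ ^ (n + 1)) = g (2⁻¹ ^ (n + 1)))
  (hright : ∀ n, p n (2⁻¹ ^ n) = g (2⁻¹ ^ n))
include hright

theorem dyadicSplice_two_inv_pow (n : ℕ) : dyadicSplice g p (2⁻¹ ^ n) = g (2⁻¹ ^ n) :=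
  (dyadicSplice_of_mem ⟨two_inv_pow_succ_lt n, le_rfl⟩).trans (hright n)

include hleft

theorem dyadicSplice_eqOn (n : ℕ) :
    EqOn (dyadicSplice g p) (p n) (Icc ((2⁻¹ : ℝ) ^ (n + 1)) (2⁻¹ ^ n)) := by
  intro t ht
  rcases eq_or_lt_of_le ht.1 with rfl | hlt
  · rw [dyadicSplice_two_inv_pow hright, hleft]
  · exact dyadicSplice_of_mem ⟨hlt, ht.2⟩

variable [PseudoMetricSpace Y] {K : NNReal}
  (hp : ∀ n, LipschitzOnWith K (p n) (Icc ((2⁻¹ : ℝ) ^ (n + 1)) (2⁻¹ ^ n)))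
include hp

theorem lipschitzOnWith_dyadicSplice_Icc_two_inv_pow (N : ℕ) :
    LipschitzOnWith K (dyadicSplice g p) (Icc ((2⁻¹ : ℝ) ^ N) 1) := by
  have hpiece n := (hp n).congr (dyadicSplice_eqOn hleft hright n).symm
  induction N with
  | zero => exact (hpiece 0).mono (Icc_subset_Icc (by norm_num) (by simp))
  | succ N ih =>
    have hN := (two_inv_pow_mem_Icc N).2
    rw [← Icc_union_Icc_eq_Icc (antitone_two_inv_pow N.le_succ) hN]
    exact (hpiece N).union_of_le ih ⟨antitone_two_inv_pow N.le_succ, le_rfl⟩ ⟨le_rfl, hN⟩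
      (fun _ hx => hx.2) (fun _ hy => hy.1)

/-- Near `0` the pieces accumulate, so `0` is reached by gluing the pair `{0, 2⁻ᴺ}`, on which the
splice agrees with `g`, to the tail `[2⁻ᴺ, 1]`. -/
theorem lipschitzOnWith_dyadicSplice (hg : LipschitzOnWith K g (Icc 0 1)) :
    LipschitzOnWith K (dyadicSplice g p) (Icc 0 1) := by
  have hnear (N : ℕ) : LipschitzOnWith K (dyadicSplice g p) (insert 0 (Icc ((2⁻¹ : ℝ) ^ N) 1)) := by
    obtain ⟨hpos, hN⟩ := two_inv_pow_mem_Icc N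
    have hmem : (2⁻¹ : ℝ) ^ N ∈ Icc ((2⁻¹ : ℝ) ^ N) 1 := ⟨le_rfl, hN⟩
    have hends : LipschitzOnWith K (dyadicSplice g p) {0, 2⁻¹ ^ N} := by
      refine (hg.mono ?_).congr ?_
      · exact insert_subset_iff.2 ⟨⟨le_rfl, zero_le_one⟩, singleton_subset_iff.2 ⟨hpos, hN⟩⟩
      · rintro t (rfl | rfl)
        · exact dyadicSplice_zero.symm
        · exact (dyadicSplice_two_inv_pow hright N).symm
    have := hends.union_of_le (lipschitzOnWith_dyadicSplice_Icc_two_inv_pow hleft hright hp N)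
      (by simp) hmem (by rintro t (rfl | rfl) <;> simp) (fun _ hy => hy.1)
    rwa [insert_union, singleton_union, insert_eq_of_mem hmem] at this
  have hev (x : ℝ) (hx : x ∈ Icc (0 : ℝ) 1) :
      ∀ᶠ N in Filter.atTop, x ∈ insert 0 (Icc ((2⁻¹ : ℝ) ^ N) 1) := by
    rcases eq_or_lt_of_le hx.1 with rfl | hpos
    · exact Filter.Eventually.of_forall fun _ => mem_insert _ _
    · have h2 : Filter.Tendsto (fun N : ℕ => (2⁻¹ : ℝ) ^ N) Filter.atTop (nhds 0) :=
        tendsto_pow_atTop_nhds_zero_of_lt_one (by norm_num) (by norm_num)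
      filter_upwards [h2.eventually_lt_const hpos] with N hN using Or.inr ⟨hN.le, hx.2⟩
  intro x hx y hy
  obtain ⟨N, hxN, hyN⟩ := ((hev x hx).and (hev y hy)).exists
  exact hnear N hxN hyN

end DyadicSplice

section Rerouting

variable {X : Type*} [MetricSpace X] {u v : X} {γ : unitInterval → X} {σ : ℕ → unitInterval → X}

theorem IsGeodesic.dist_IccExtend_two_inv_pow (hγ : IsGeodesic u v γ) (n : ℕ) :
    dist (IccExtend zero_le_one γ (2⁻¹ ^ (n + 1))) (IccExtend zero_le_one γ (2⁻¹ ^ n)) =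
      nndist u v * ((2⁻¹ : ℝ) ^ n - 2⁻¹ ^ (n + 1)) := by
  rw [hγ.dist_IccExtend_s14 (two_inv_pow_mem_Icc _) (two_inv_pow_mem_Icc _), coe_nndist, Real.dist_eq,
    abs_of_neg (sub_neg.2 (two_inv_pow_succ_lt n)), neg_sub]

def IsDyadicRerouting (γ : unitInterval → X) (σ : ℕ → unitInterval → X) : Prop :=
  ∀ n, IsGeodesic (IccExtend zero_le_one γ (2⁻¹ ^ (n + 1))) (IccExtend zero_le_one γ (2⁻¹ ^ n))
    (σ n)

noncomputable def spliceGeodesics (γ : unitInterval → X) (σ : ℕ → unitInterval → X)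
    (t : unitInterval) : X :=
  dyadicSplice (IccExtend zero_le_one γ) (fun n => σ n ∘ unitRescale (2⁻¹ ^ (n + 1)) (2⁻¹ ^ n)) t

namespace IsDyadicRerouting

variable (hσ : IsDyadicRerouting γ σ)
include hσ

theorem apply_left (n : ℕ) :
    (σ n ∘ unitRescale (2⁻¹ ^ (n + 1)) (2⁻¹ ^ n)) (2⁻¹ ^ (n + 1)) =
      IccExtend zero_le_one γ (2⁻¹ ^ (n + 1)) := by
  rw [comp_apply, unitRescale_left, (hσ n).1]

theorem apply_right (n : ℕ) :
    (σ n ∘ unitRescale (2⁻¹ ^ (n + 1)) (2⁻¹ ^ n)) (2⁻¹ ^ n) =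
      IccExtend zero_le_one γ (2⁻¹ ^ n) := by
  rw [comp_apply, unitRescale_right (two_inv_pow_succ_lt n), (hσ n).2.1]

theorem spliceGeodesics_apply {n : ℕ} {t : unitInterval}
    (ht : (t : ℝ) ∈ Icc ((2⁻¹ : ℝ) ^ (n + 1)) (2⁻¹ ^ n)) :
    spliceGeodesics γ σ t = σ n (unitRescale (2⁻¹ ^ (n + 1)) (2⁻¹ ^ n) t) :=
  dyadicSplice_eqOn hσ.apply_left hσ.apply_right n ht

theorem isGeodesic_spliceGeodesics (hγ : IsGeodesic u v γ) :
    IsGeodesic u v (spliceGeodesics γ σ) := by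
  have hg : LipschitzOnWith (nndist u v) (IccExtend zero_le_one γ) (Icc 0 1) :=
    LipschitzOnWith.of_dist_le_mul fun s hs t ht => by rw [coe_nndist, hγ.dist_IccExtend_s14 hs ht]
  have hp (n : ℕ) : LipschitzOnWith (nndist u v) (σ n ∘ unitRescale (2⁻¹ ^ (n + 1)) (2⁻¹ ^ n))
      (Icc (2⁻¹ ^ (n + 1)) (2⁻¹ ^ n)) :=
    ((hσ n).lipschitzWith_comp_unitRescale (two_inv_pow_succ_lt n)
      (hγ.dist_IccExtend_two_inv_pow n)).lipschitzOnWith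
  refine isGeodesic_of_lipschitzWith ?_ ?_
    (lipschitzOnWith_dyadicSplice hσ.apply_left hσ.apply_right hp hg).to_restrict
  · rw [spliceGeodesics, Icc.coe_zero, dyadicSplice_zero,
      IccExtend_of_mem _ _ ⟨le_rfl, zero_le_one⟩]
    exact hγ.1
  · have := dyadicSplice_two_inv_pow hσ.apply_right 0
    rw [pow_zero, IccExtend_of_mem _ _ ⟨zero_le_one, le_rfl⟩] at this
    rw [spliceGeodesics, Icc.coe_one, this]
    exact hγ.2.1

end IsDyadicRerouting

theorem injOn_spliceGeodesics (γ : unitInterval → X) :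
    InjOn (spliceGeodesics γ) {σ | IsDyadicRerouting γ σ} := by
  intro σ hσ σ' hσ' h
  funext n s
  obtain ⟨t, ht, rfl⟩ := surjOn_unitRescale (two_inv_pow_succ_lt n) (mem_univ s)
  have ht01 : t ∈ Icc (0 : ℝ) 1 :=
    ⟨(two_inv_pow_mem_Icc _).1.trans ht.1, ht.2.trans (two_inv_pow_mem_Icc _).2⟩
  have := congrFun h ⟨t, ht01⟩
  rwa [hσ.spliceGeodesics_apply ht, hσ'.spliceGeodesics_apply ht] at this

end Rerouting

theorem Multigeodesic.exists_injective_geodesics {X : Type*} [MetricSpace X]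
    (hX : Multigeodesic X) {u v : X} (huv : u ≠ v) :
    ∃ F : Set ℕ → unitInterval → X, Injective F ∧ ∀ A, IsGeodesic u v (F A) := by
  classical
  obtain ⟨γ, -, hγ, -⟩ := hX u v huv
  have hne (n : ℕ) :
      IccExtend zero_le_one γ (2⁻¹ ^ (n + 1)) ≠ IccExtend zero_le_one γ (2⁻¹ ^ n) := by
    rw [← dist_pos, hγ.dist_IccExtend_two_inv_pow, coe_nndist]
    exact mul_pos (dist_pos.2 huv) (sub_pos.2 (two_inv_pow_succ_lt n))
  choose σ₁ σ₂ h₁ h₂ h₁₂ using fun n => hX _ _ (hne n)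
  let σ (A : Set ℕ) (n : ℕ) : unitInterval → X := if n ∈ A then σ₁ n else σ₂ n
  have hσ (A : Set ℕ) : IsDyadicRerouting γ (σ A) := fun n => by
    dsimp only [σ]
    split_ifs
    exacts [h₁ n, h₂ n]
  have hσ_inj : Injective σ := fun A B hAB => by
    ext n
    have := congrFun hAB n
    by_cases hA : n ∈ A <;> by_cases hB : n ∈ B <;> simp_all [σ, h₁₂ n, (h₁₂ n).symm]
  exact ⟨fun A => spliceGeodesics γ (σ A),
    fun A B h => hσ_inj (injOn_spliceGeodesics γ (hσ A) (hσ B) h),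
    fun A => (hσ A).isGeodesic_spliceGeodesics hγ⟩

theorem not_countable_set_nat : ¬ Countable (Set ℕ) := fun _ =>
  let ⟨f, hf⟩ := Countable.exists_injective_nat (Set ℕ)
  cantor_injective f hf

theorem statement14 {X : Type*} [MetricSpace X] (hX : Multigeodesic X)
    (u v : X) (huv : u ≠ v) :
    ¬ {γ : unitInterval → X | IsGeodesic u v γ}.Countable := by
  obtain ⟨F, hF_inj, hF⟩ := hX.exists_injective_geodesics huv
  intro hC
  refine not_countable_set_nat (countable_univ_iff.1 ?_)
  exact MapsTo.countable_of_injOn (fun A _ => hF A) hF_inj.injOn hC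
end
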